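/- Every uniquely weakly D-nil-clean ring R is either a D-ring or isomorphic (as a ring) to a product A × B of two uniquely weakly nil-clean rings A and B. -/

import Mathlib

universe u v

/-- An element `e` is a very idempotent if `e` or `-e` is an idempotent. -/
def IsVeryIdempotent {R : Type u} [Ring R] (e : R) : Prop :=
  IsIdempotentElem e ∨ IsIdempotentElem (-e)

/-- `a` is uniquely weakly nil-clean: it is a sum of a nilpotent and a very idempotent,
and for any two such representations `a = w₁ + e₁ = w₂ + e₂` one has `e₁ ^ 2 = e₂ ^ 2`. -/
def IsUniquelyWeaklyNilClean {R : Type u} [Ring R] (a : R) : Prop :=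
  (∃ w e : R, IsNilpotent w ∧ IsVeryIdempotent e ∧ a = w + e) ∧
  ∀ w₁ e₁ w₂ e₂ : R, IsNilpotent w₁ → IsVeryIdempotent e₁ → IsNilpotent w₂ →
    IsVeryIdempotent e₂ → a = w₁ + e₁ → a = w₂ + e₂ → e₁ ^ 2 = e₂ ^ 2

/-- A ring is uniquely weakly nil-clean if every element is. -/
def UniquelyWeaklyNilCleanRing (R : Type u) [Ring R] : Prop :=
  ∀ a : R, IsUniquelyWeaklyNilClean a

/-- `a` is uniquely nil-clean: it is a sum of a nilpotent and an idempotent,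
and for any two such representations `a = w₁ + e₁ = w₂ + e₂` one has `e₁ = e₂`. -/
def IsUniquelyNilClean {R : Type u} [Ring R] (a : R) : Prop :=
  (∃ w e : R, IsNilpotent w ∧ IsIdempotentElem e ∧ a = w + e) ∧
  ∀ w₁ e₁ w₂ e₂ : R, IsNilpotent w₁ → IsIdempotentElem e₁ → IsNilpotent w₂ →
    IsIdempotentElem e₂ → a = w₁ + e₁ → a = w₂ + e₂ → e₁ = e₂

/-- A ring is uniquely nil-clean if every element is. -/
def UniquelyNilCleanRing (R : Type u) [Ring R] : Prop :=
  ∀ a : R, IsUniquelyNilClean a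

/-- `a` is a zero-divisor: there are nonzero `b, c` with `a * b = 0` and `c * a = 0`. -/
def IsZeroDivisorPair {R : Type u} [Ring R] (a : R) : Prop :=
  ∃ b c : R, b ≠ 0 ∧ c ≠ 0 ∧ a * b = 0 ∧ c * a = 0

/-- A ring is abelian if every idempotent is central. -/
def AbelianRing (R : Type u) [Ring R] : Prop :=
  ∀ e : R, IsIdempotentElem e → ∀ x : R, e * x = x * e

/-- A ring is periodic if every element satisfies `a ^ m = a ^ n` for distinct positive `m, n`. -/
def PeriodicRing (R : Type u) [Ring R] : Prop :=
  ∀ a : R, ∃ m n : ℕ, 0 < m ∧ 0 < n ∧ m ≠ n ∧ a ^ m = a ^ n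

/-- A Boolean ring: every element is idempotent. -/
def IsBooleanRing (R : Type u) [Ring R] : Prop :=
  ∀ a : R, IsIdempotentElem a

/-- `R / J(R)` is isomorphic to `S`, expressed via a surjective ring homomorphism
whose kernel is exactly the Jacobson radical of `R`. -/
def QuotJacobsonIsoTo (R : Type u) [Ring R] (S : Type v) [Ring S] : Prop :=
  ∃ f : R →+* S, Function.Surjective f ∧
    ∀ a : R, f a = 0 ↔ a ∈ Ideal.jacobson (⊥ : Ideal R)

/-!
If `f` is idempotent, so is `f + f x (1 - f)`; unless it is `1` it is a zero-divisor, and its two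
decompositions `0 + (f + f x (1 - f)) = f x (1 - f) + f` force `f x (1 - f) = 0`. Hence a uniquely
weakly D-nil-clean ring is abelian. A zero-divisor `w + e` that is not nilpotent yields a
nontrivial idempotent `f = ±e`, and `R ≃ fR × (1 - f)R`. Every element of a corner `fR` with
`f ≠ 1` is a zero-divisor of `R`, killed by `1 - f`, and nilpotents and very idempotents pass
between `R` and `fR` through `r ↦ f r` and the inclusion, so both corners are uniquely weakly
nil-clean.
-/

def UniquelyWeaklyDNilCleanRing (R : Type*) [Ring R] : Prop :=
  ∀ a : R, IsZeroDivisorPair a → IsUniquelyWeaklyNilClean a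

variable {R : Type*} [Ring R]

theorem not_isZeroDivisorPair_of_isUnit {a : R} (ha : IsUnit a) : ¬IsZeroDivisorPair a := by
  rintro ⟨b, -, hb, -, hab, -⟩
  exact hb (ha.mul_right_eq_zero.mp hab)

theorem isZeroDivisorPair_of_mul_eq_self {e x : R} (he : e ≠ 1) (hex : e * x = x)
    (hxe : x * e = x) : IsZeroDivisorPair x :=
  ⟨1 - e, 1 - e, sub_ne_zero.mpr he.symm, sub_ne_zero.mpr he.symm,
    by rw [mul_sub, mul_one, hxe, sub_self], by rw [sub_mul, one_mul, hex, sub_self]⟩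

theorem IsVeryIdempotent.map {S F : Type*} [Ring S] [FunLike F R S] [RingHomClass F R S]
    (φ : F) {e : R} (he : IsVeryIdempotent e) : IsVeryIdempotent (φ e) :=
  he.imp (·.map φ) fun h => map_neg φ e ▸ h.map φ

theorem exists_isIdempotentElem_ne_zero_ne_one_of_not_isNilpotent {a : R}
    (ha : IsZeroDivisorPair a) (hna : ¬IsNilpotent a)
    (hwe : ∃ w e : R, IsNilpotent w ∧ IsVeryIdempotent e ∧ a = w + e) :
    ∃ f : R, IsIdempotentElem f ∧ f ≠ 0 ∧ f ≠ 1 := by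
  obtain ⟨w, e, hw, he | he, rfl⟩ := hwe
  · refine ⟨e, he, ?_, ?_⟩ <;> rintro rfl
    · exact hna (by simpa using hw)
    · exact not_isZeroDivisorPair_of_isUnit hw.isUnit_add_one ha
  · refine ⟨-e, he, ?_, ?_⟩ <;> intro he'
    · exact hna (by simpa [neg_eq_zero.mp he'] using hw)
    · rw [neg_eq_iff_eq_neg.mp he', ← sub_eq_add_neg, ← neg_sub] at ha
      exact not_isZeroDivisorPair_of_isUnit hw.isUnit_one_sub.neg ha

theorem mul_self_eq_zero_of_mul_eq {M : Type*} [SemigroupWithZero M] {f u : M} (hfu : f * u = u)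
    (huf : u * f = 0) : u * u = 0 := by
  nth_rw 2 [← hfu]
  rw [← mul_assoc, huf, zero_mul]

theorem IsIdempotentElem.add_of_mul_eq {f u : R} (hf : IsIdempotentElem f) (hfu : f * u = u)
    (huf : u * f = 0) : IsIdempotentElem (f + u) := by
  rw [IsIdempotentElem, add_mul, mul_add, mul_add, hf.eq, hfu, huf,
    mul_self_eq_zero_of_mul_eq hfu huf, add_zero, add_zero]

namespace IsIdempotentElem

variable {f : R} {idem : IsIdempotentElem f}

theorem Corner.val_pow_succ (a : idem.Corner) (n : ℕ) : (a ^ (n + 1)).1 = a.1 ^ (n + 1) := by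
  induction n with
  | zero => rw [pow_one, pow_one]
  | succ n ih => rw [pow_succ, pow_succ a.1, ← ih]; rfl

theorem Corner.isNilpotent_val {a : idem.Corner} (ha : IsNilpotent a) : IsNilpotent a.1 := by
  obtain ⟨n, hn⟩ := ha
  exact ⟨n + 1, by rw [← Corner.val_pow_succ, pow_succ, hn, zero_mul]; rfl⟩

theorem Corner.isVeryIdempotent_val {e : idem.Corner} (he : IsVeryIdempotent e) :
    IsVeryIdempotent e.1 :=
  he.imp (congrArg Subtype.val) (congrArg Subtype.val)

variable (idem) in
def cornerProj (hc : IsMulCentral f) : R →+* idem.Corner where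
  toFun r := ⟨f * r, (Subsemigroup.mem_corner_iff_mem_range_mul_left idem hc).mpr ⟨r, rfl⟩⟩
  map_one' := Subtype.ext (mul_one f)
  map_mul' r s := Subtype.ext <| show f * (r * s) = f * r * (f * s) by
    rw [mul_assoc f r, ← hc.left_comm r s, ← mul_assoc f f, idem.eq]
  map_zero' := Subtype.ext (mul_zero f)
  map_add' r s := Subtype.ext (mul_add f r s)

theorem cornerProj_val (hc : IsMulCentral f) (a : idem.Corner) : idem.cornerProj hc a.1 = a :=
  Subtype.ext ((Subsemigroup.mem_corner_iff idem).mp a.2).1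

end IsIdempotentElem

namespace UniquelyWeaklyDNilCleanRing

open IsIdempotentElem

theorem eq_zero_of_isIdempotentElem_add (h : UniquelyWeaklyDNilCleanRing R) {f u : R}
    (hf : IsIdempotentElem f) (hf1 : f ≠ 1) (hfu : IsIdempotentElem (f + u))
    (hu : IsNilpotent u) : u = 0 := by
  have hfu1 : f + u ≠ 1 := by
    intro hfu1
    rw [← eq_sub_iff_add_eq'] at hfu1
    subst hfu1
    exact hf1 (sub_eq_zero.mp (hf.one_sub.eq_zero_of_isNilpotent hu)).symm
  have hsq : (f + u) ^ 2 = f ^ 2 :=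
    (h _ (isZeroDivisorPair_of_mul_eq_self hfu1 hfu.eq hfu.eq)).2 0 (f + u) u f
      IsNilpotent.zero (Or.inl hfu) hu (Or.inl hf) (zero_add _).symm (add_comm f u)
  rwa [hfu.pow_succ_eq, hf.pow_succ_eq, add_eq_left] at hsq

theorem mul_mul_one_sub_eq_zero (h : UniquelyWeaklyDNilCleanRing R) {f : R}
    (hf : IsIdempotentElem f) (x : R) : f * x * (1 - f) = 0 := by
  by_cases hf1 : f = 1
  · rw [hf1, sub_self, mul_zero]
  have hfu : f * (f * x * (1 - f)) = f * x * (1 - f) := by rw [← mul_assoc, ← mul_assoc, hf.eq]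
  have huf : f * x * (1 - f) * f = 0 := by rw [mul_assoc, hf.one_sub_mul_self, mul_zero]
  exact h.eq_zero_of_isIdempotentElem_add hf hf1 (hf.add_of_mul_eq hfu huf)
    ⟨2, by rw [sq, mul_self_eq_zero_of_mul_eq hfu huf]⟩

theorem abelianRing (h : UniquelyWeaklyDNilCleanRing R) : AbelianRing R := by
  intro f hf x
  have hl := h.mul_mul_one_sub_eq_zero hf x
  have hr := h.mul_mul_one_sub_eq_zero hf.one_sub x
  rw [mul_sub, mul_one, sub_eq_zero] at hl
  rw [sub_sub_cancel, sub_mul, sub_mul, one_mul, sub_eq_zero] at hr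
  rw [hl, hr]

theorem isMulCentral (h : UniquelyWeaklyDNilCleanRing R) {f : R}
    (hf : IsIdempotentElem f) : IsMulCentral f :=
  Semigroup.mem_center_iff.mpr fun x => (h.abelianRing f hf x).symm

theorem uniquelyWeaklyNilCleanRing_corner (h : UniquelyWeaklyDNilCleanRing R) {f : R}
    (idem : IsIdempotentElem f) (hf1 : f ≠ 1) : UniquelyWeaklyNilCleanRing idem.Corner := by
  intro a
  let π := idem.cornerProj (h.isMulCentral idem)
  obtain ⟨hfa, haf⟩ := (Subsemigroup.mem_corner_iff idem).mp a.2
  obtain ⟨⟨w, e, hw, he, hawe⟩, huniq⟩ :=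
    h a.1 (isZeroDivisorPair_of_mul_eq_self hf1 hfa haf)
  refine ⟨⟨π w, π e, hw.map π, he.map π, ?_⟩, ?_⟩
  · rw [← map_add, ← hawe, idem.cornerProj_val]
  intro w₁ e₁ w₂ e₂ hw₁ he₁ hw₂ he₂ h₁ h₂
  refine Subtype.ext ?_
  rw [Corner.val_pow_succ, Corner.val_pow_succ]
  exact huniq _ _ _ _ (Corner.isNilpotent_val hw₁) (Corner.isVeryIdempotent_val he₁)
    (Corner.isNilpotent_val hw₂) (Corner.isVeryIdempotent_val he₂) (congrArg Subtype.val h₁)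
    (congrArg Subtype.val h₂)

end UniquelyWeaklyDNilCleanRing

theorem stmt7 (R : Type u) [Ring R]
    (h : ∀ a : R, IsZeroDivisorPair a → IsUniquelyWeaklyNilClean a) :
    (∀ a : R, IsZeroDivisorPair a → IsNilpotent a) ∨
      ∃ (A B : Type u) (_ : Ring A) (_ : Ring B),
        UniquelyWeaklyNilCleanRing A ∧ UniquelyWeaklyNilCleanRing B ∧
          Nonempty (R ≃+* A × B) := by
  have hD : UniquelyWeaklyDNilCleanRing R := h
  by_cases hnil : ∀ a : R, IsZeroDivisorPair a → IsNilpotent a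
  · exact Or.inl hnil
  push Not at hnil
  obtain ⟨a, ha, hna⟩ := hnil
  obtain ⟨f, hf, hf0, hf1⟩ :=
    exists_isIdempotentElem_ne_zero_ne_one_of_not_isNilpotent ha hna (h a ha).1
  have hpair := CompleteOrthogonalIdempotents.of_isIdempotentElem hf
  have hsplit : R ≃+* hf.Corner × hf.one_sub.Corner :=
    (hpair.ringEquivOfIsMulCentral fun i => hD.isMulCentral (hpair.idem i)).trans
      (RingEquiv.piFinTwo _)
  exact Or.inr ⟨_, _, _, _, hD.uniquelyWeaklyNilCleanRing_corner hf hf1,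
    hD.uniquelyWeaklyNilCleanRing_corner hf.one_sub fun h1 => hf0 (sub_eq_self.mp h1), ⟨hsplit⟩⟩
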